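/- Shamir/LCC t-privacy: let f(x) = Σ_{j=1}^{m} s_j · ℓ_j(x) + Σ_{j=1}^{t} r_j · ℓ_{m+j}(x) where ℓ_1,…,ℓ_{m+t} are the Lagrange basis polynomials for m+t distinct points β_1,…,β_{m+t} ∈ 𝔽_p, and r_1,…,r_t are i.i.d. uniform on 𝔽_p. Then for any t distinct evaluation points α_1,…,α_t ∈ 𝔽_p disjoint from {β_1,…,β_m}, the tuple (f(α_1),…,f(α_t)) is uniformly distributed on 𝔽_p^t, independently of the secrets (s_1,…,s_m). -/
import Mathlib


open Polynomial

private lemma pmf_map_uniform_of_injective {γ : Type*} [Fintype γ] [Nonempty γ]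
    (f : γ → γ) (hf : Function.Injective f) :
    PMF.map f (PMF.uniformOfFintype γ) = PMF.uniformOfFintype γ := by
  classical
  have hb : Function.Bijective f := hf.bijective_of_finite
  let e : γ ≃ γ := Equiv.ofBijective f hb
  have hfe : f = ⇑e := rfl
  ext b
  rw [PMF.map_apply, tsum_fintype]
  have : ∀ a : γ, (if b = f a then (PMF.uniformOfFintype γ) a else 0)
      = if e.symm b = a then (PMF.uniformOfFintype γ) a else 0 := by
    intro a
    congr 1
    rw [hfe]
    exact propext (Equiv.symm_apply_eq e).symm
  rw [Finset.sum_congr rfl fun a _ => this a]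
  simp [PMF.uniformOfFintype_apply]

/-- Shamir/LCC `t`-privacy: with `f(x) = Σ_j s_j ℓ_j(x) + Σ_j r_j ℓ_{m+j}(x)` for
Lagrange basis polynomials `ℓ` at distinct nodes `β`, and `r` i.i.d. uniform, any
`t` shares `(f(α_1),…,f(α_t))` at distinct points `α_i ∉ {β_1,…,β_m}` are
uniformly distributed, independently of the secrets `s`. -/
theorem shamir_t_privacy (F : Type*) [Field F] [Fintype F] [DecidableEq F] [Nonempty F]
    (m t : ℕ) (β : Fin (m + t) → F) (hβ : Function.Injective β)
    (α : Fin t → F) (hα : Function.Injective α)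
    (hdisj : ∀ i (j : Fin m), α i ≠ β (Fin.castAdd t j)) :
    ∀ s : Fin m → F,
      PMF.map
        (fun r : Fin t → F => fun i : Fin t =>
          ((∑ j : Fin m, Polynomial.C (s j) *
              Lagrange.basis Finset.univ β (Fin.castAdd t j))
            + ∑ j : Fin t, Polynomial.C (r j) *
              Lagrange.basis Finset.univ β (Fin.natAdd m j)).eval (α i))
        (PMF.uniformOfFintype (Fin t → F))
      = PMF.uniformOfFintype (Fin t → F) := by
  intro s
  apply pmf_map_uniform_of_injective
  intro r r' h
  have hβInj : Set.InjOn β (Finset.univ : Finset (Fin (m + t))) := fun x _ y _ hxy => hβ hxy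
  set g : F[X] := ∑ j : Fin t, Polynomial.C (r j - r' j) *
      Lagrange.basis Finset.univ β (Fin.natAdd m j) with hg
  -- g vanishes at all α i
  have hgα : ∀ i : Fin t, g.eval (α i) = 0 := by
    intro i
    have := congrFun h i
    simp only [eval_add, eval_finset_sum, eval_mul, eval_C] at this
    have h2 : ∑ j : Fin t, r j * (Lagrange.basis Finset.univ β (Fin.natAdd m j)).eval (α i)
        = ∑ j : Fin t, r' j * (Lagrange.basis Finset.univ β (Fin.natAdd m j)).eval (α i) := by
      exact add_left_cancel this
    simp only [hg, eval_finset_sum, eval_mul, eval_C, sub_mul]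
    rw [Finset.sum_sub_distrib, h2, sub_self]
  -- g vanishes at β (castAdd t j)
  have hgβ : ∀ j : Fin m, g.eval (β (Fin.castAdd t j)) = 0 := by
    intro j
    simp only [hg, eval_finset_sum, eval_mul, eval_C]
    apply Finset.sum_eq_zero
    intro k _
    rw [Lagrange.eval_basis_of_ne (by simp [Fin.ext_iff]; omega) (Finset.mem_univ _), mul_zero]
  ext j
  -- t ≥ 1, so m + t ≥ 1
  have hpos : 0 < m + t := by have := j.pos; omega
  -- the m + t distinct points as an injective function from Fin m ⊕ Fin t
  have hginj : Function.Injective (Sum.elim (fun j : Fin m => β (Fin.castAdd t j)) α) := by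
    rintro (a | a) (b | b) hab <;> simp only [Sum.elim_inl, Sum.elim_inr] at hab
    · have := hβ hab; simp [Fin.ext_iff] at this ⊢; omega
    · exact absurd hab.symm (hdisj b a)
    · exact absurd hab (hdisj a b)
    · exact congrArg Sum.inr (hα hab)
  have hg0 : g = 0 := by
    apply Polynomial.eq_zero_of_natDegree_lt_card_of_eval_eq_zero g hginj
    · rintro (a | a)
      · exact hgβ a
      · exact hgα a
    · have hdeg : g.natDegree ≤ m + t - 1 := by
        apply Polynomial.natDegree_sum_le_of_forall_le
        intro k _
        refine le_trans (Polynomial.natDegree_mul_le) ?_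
        rw [Polynomial.natDegree_C, zero_add,
          Lagrange.natDegree_basis hβInj (Finset.mem_univ _)]
        simp
      have : Fintype.card (Fin m ⊕ Fin t) = m + t := by simp
      omega
  -- evaluate g = 0 at β (natAdd m j) to conclude r j = r' j
  have heval : ∀ k : Fin t,
      (Lagrange.basis Finset.univ β (Fin.natAdd m k)).eval (β (Fin.natAdd m j))
        = if k = j then 1 else 0 := by
    intro k
    by_cases hkj : k = j
    · subst hkj
      simp [Lagrange.eval_basis_self hβInj (Finset.mem_univ _)]
    · rw [if_neg hkj]
      refine Lagrange.eval_basis_of_ne ?_ (Finset.mem_univ _)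
      intro hc
      apply hkj
      have : (m : ℕ) + k = m + j := by simpa [Fin.ext_iff] using hc
      exact Fin.ext (by omega)
  have := congrArg (Polynomial.eval (β (Fin.natAdd m j))) hg0
  simp only [hg, eval_finset_sum, eval_mul, eval_C, eval_zero, heval, mul_ite, mul_one,
    mul_zero, Finset.sum_ite_eq', Finset.mem_univ, if_true] at this
  exact sub_eq_zero.mp this
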